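/- arXiv:2111.10409 — 2 statements merged into one kernel-verified Lean document; each statement's English description precedes it below -/
import Mathlib

section
/- Let f : {0,1}^N → {0,1,⊥}, and let ρ, σ be independent random restrictions with Pr[*] = p and q respectively. Suppose there are classes of partial functions C and D such that (a) E_ρ[disagr_{f_ρ}(C)] ≤ ε, and (b) for every g ∈ C, E_σ[disagr_{g_σ}(D)] ≤ δ. Then E_{ρσ}[disagr_{f_{ρσ}}(D)] ≤ ε + δ. -/
open Finset

/-- Disagreement of `g` with the partial function `f`. -/
noncomputable def disagr (N : ℕ) (f g : (Fin N → Bool) → Option Bool) : ℝ :=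
  ((Finset.univ.filter fun x : Fin N → Bool => (f x).isSome ∧ g x ≠ f x).card : ℝ) / 2 ^ N

/-- Disagreement of a class `C` with `f`: the infimum (= minimum, as only finitely
many values occur) of the disagreements of members of `C` with `f`. -/
noncomputable def disagrClass (N : ℕ) (f : (Fin N → Bool) → Option Bool)
    (C : Set ((Fin N → Bool) → Option Bool)) : ℝ :=
  sInf (disagr N f '' C)

/-- Probability of the restriction `ρ` (with `none` = `*`) under `Pr[*] = p`. -/
noncomputable def restrictionWeight (N : ℕ) (p : ℝ) (ρ : Fin N → Option Bool) : ℝ :=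
  ∏ i : Fin N, if ρ i = none then p else (1 - p) / 2

/-- The restricted function `f_ρ`. -/
def restrictFn (N : ℕ) (f : (Fin N → Bool) → Option Bool) (ρ : Fin N → Option Bool) :
    (Fin N → Bool) → Option Bool :=
  fun y => f fun i => (ρ i).getD (y i)

/-- Composition of restrictions: first apply `ρ`, then `σ` on the variables left
unrestricted by `ρ`. -/
def restrictionComp (N : ℕ) (ρ σ : Fin N → Option Bool) : Fin N → Option Bool :=
  fun i => match ρ i with
    | some b => some b
    | none => σ i

/-! Fix `ρ` and pick `g ∈ C` attaining `disagr_{f_ρ}(C)` (only finitely many values occur). For every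
`σ` the triangle inequality gives `disagr_{f_ρσ}(D) ≤ disagr_{(f_ρ)_σ}(g_σ) + disagr_{g_σ}(D)`, and
averaging over `σ` turns the first term back into `disagr_{f_ρ}(g)`: a uniform point fed through a
`q`-random restriction is again a uniform point. Averaging over `ρ` then yields `ε + δ`. -/

theorem sum_prod_mul_comp_eq_sum {ι κ β R : Type*} [Fintype ι] [DecidableEq ι] [Fintype κ]
    [Fintype β] [DecidableEq β] [CommSemiring R] (w : κ → R) (g : κ → β)
    (hw : ∀ b, ∑ k with g k = b, w k = 1) (h : (ι → β) → R) :
    ∑ τ : ι → κ, (∏ i, w (τ i)) * h (g ∘ τ) = ∑ x, h x := by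
  rw [← sum_fiberwise univ (g ∘ ·)]
  refine sum_congr rfl fun x _ => ?_
  have hfiber : ({τ | g ∘ τ = x} : Finset (ι → κ)) = Fintype.piFinset fun i => {k | g k = x i} := by
    ext τ
    simp [funext_iff]
  calc ∑ τ with g ∘ τ = x, (∏ i, w (τ i)) * h (g ∘ τ)
      = (∑ τ ∈ Fintype.piFinset fun i => {k | g k = x i}, ∏ i, w (τ i)) * h x := by
        rw [sum_mul, ← hfiber]
        exact sum_congr rfl fun τ hτ => by rw [(mem_filter.1 hτ).2]
    _ = h x := by simp [← prod_univ_sum, hw]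

section Restrictions

variable {N : ℕ}

theorem disagr_nonneg (f g : (Fin N → Bool) → Option Bool) : 0 ≤ disagr N f g := by
  unfold disagr; positivity

theorem disagr_eq_sum (f g : (Fin N → Bool) → Option Bool) :
    disagr N f g = ∑ x, if (f x).isSome ∧ g x ≠ f x then (1 / 2 ^ N : ℝ) else 0 := by
  rw [disagr, card_filter, Nat.cast_sum, sum_div]
  exact sum_congr rfl fun x _ => by split_ifs <;> simp

theorem disagr_triangle (f g h : (Fin N → Bool) → Option Bool) :
    disagr N f h ≤ disagr N f g + disagr N g h := by
  simp only [disagr_eq_sum, ← sum_add_distrib]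
  refine sum_le_sum fun x _ => ?_
  split_ifs <;> simp_all

theorem disagrClass_le_disagr (f : (Fin N → Bool) → Option Bool)
    {C : Set ((Fin N → Bool) → Option Bool)} {g : (Fin N → Bool) → Option Bool} (hg : g ∈ C) :
    disagrClass N f C ≤ disagr N f g :=
  csInf_le ⟨0, by rintro _ ⟨g, -, rfl⟩; exact disagr_nonneg f g⟩ ⟨g, hg, rfl⟩

theorem exists_disagr_eq_disagrClass (f : (Fin N → Bool) → Option Bool)
    {C : Set ((Fin N → Bool) → Option Bool)} (hC : C.Nonempty) :
    ∃ g ∈ C, disagr N f g = disagrClass N f C :=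
  (hC.image _).csInf_mem ((Set.finite_range (disagr N f)).subset (Set.image_subset_range _ _))

theorem disagrClass_le_disagr_add_disagrClass (f g : (Fin N → Bool) → Option Bool)
    (D : Set ((Fin N → Bool) → Option Bool)) :
    disagrClass N f D ≤ disagr N f g + disagrClass N g D := by
  rcases D.eq_empty_or_nonempty with rfl | hD
  · -- `sInf ∅ = 0` in `ℝ`
    simpa [disagrClass] using disagr_nonneg f g
  obtain ⟨h, hhD, hh⟩ := exists_disagr_eq_disagrClass g hD
  calc disagrClass N f D ≤ disagr N f h := disagrClass_le_disagr f hhD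
    _ ≤ disagr N f g + disagr N g h := disagr_triangle f g h
    _ = disagr N f g + disagrClass N g D := by rw [hh]

theorem restrictionWeight_nonneg {p : ℝ} (hp0 : 0 ≤ p) (hp1 : p ≤ 1) (ρ : Fin N → Option Bool) :
    0 ≤ restrictionWeight N p ρ :=
  prod_nonneg fun i _ => by split <;> linarith

theorem sum_restrictionWeight (p : ℝ) : ∑ ρ, restrictionWeight N p ρ = 1 := by
  unfold restrictionWeight
  rw [← Fintype.prod_sum fun (_ : Fin N) (v : Option Bool) => if v = none then p else (1 - p) / 2]
  simp [Fintype.sum_option, mul_div_cancel₀]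

theorem sum_restrictionWeight_mul_sum_comp (q : ℝ) (h : (Fin N → Bool) → ℝ) :
    ∑ σ, restrictionWeight N q σ * ∑ y : Fin N → Bool, h (fun i => (σ i).getD (y i)) = ∑ x, h x := by
  have hcoord : ∀ b : Bool, ∑ v : Option Bool × Bool with v.1.getD v.2 = b,
      (if v.1 = none then q else (1 - q) / 2) = 1 := by
    intro b
    rw [sum_filter, Fintype.sum_prod_type]
    cases b <;> simp [Fintype.sum_option]
  rw [← sum_prod_mul_comp_eq_sum _ _ hcoord h]
  simp only [mul_sum, ← Fintype.sum_prod_type']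
  exact Fintype.sum_equiv (Equiv.arrowProdEquivProdArrow _ _ _).symm _ _ fun _ => rfl

theorem restrictFn_restrictionComp (f : (Fin N → Bool) → Option Bool) (ρ σ : Fin N → Option Bool) :
    restrictFn N f (restrictionComp N ρ σ) = restrictFn N (restrictFn N f ρ) σ := by
  funext y
  unfold restrictFn restrictionComp
  congr 1
  funext i
  cases ρ i <;> rfl

theorem sum_restrictionWeight_mul_disagr_restrictFn (q : ℝ) (f g : (Fin N → Bool) → Option Bool) :
    ∑ σ, restrictionWeight N q σ * disagr N (restrictFn N f σ) (restrictFn N g σ) = disagr N f g := by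
  simp only [disagr_eq_sum]
  exact sum_restrictionWeight_mul_sum_comp q fun x =>
    if (f x).isSome ∧ g x ≠ f x then (1 / 2 ^ N : ℝ) else 0

theorem sum_restrictionWeight_mul_disagrClass_restrictFn_le {q : ℝ} (hq0 : 0 ≤ q) (hq1 : q ≤ 1)
    (f g : (Fin N → Bool) → Option Bool) (D : Set ((Fin N → Bool) → Option Bool)) :
    ∑ σ, restrictionWeight N q σ * disagrClass N (restrictFn N f σ) D ≤
      disagr N f g + ∑ σ, restrictionWeight N q σ * disagrClass N (restrictFn N g σ) D :=
  calc ∑ σ, restrictionWeight N q σ * disagrClass N (restrictFn N f σ) D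
      ≤ ∑ σ, restrictionWeight N q σ * (disagr N (restrictFn N f σ) (restrictFn N g σ) +
          disagrClass N (restrictFn N g σ) D) :=
        sum_le_sum fun σ _ => mul_le_mul_of_nonneg_left
          (disagrClass_le_disagr_add_disagrClass _ _ D) (restrictionWeight_nonneg hq0 hq1 σ)
    _ = disagr N f g + ∑ σ, restrictionWeight N q σ * disagrClass N (restrictFn N g σ) D := by
        rw [← sum_restrictionWeight_mul_disagr_restrictFn q f g, ← sum_add_distrib]
        simp only [mul_add]

end Restrictions

theorem disagr_composing_restrictions_general (N : ℕ) (p q ε δ : ℝ)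
    (hp0 : 0 ≤ p) (hp1 : p ≤ 1) (hq0 : 0 ≤ q) (hq1 : q ≤ 1)
    (f : (Fin N → Bool) → Option Bool)
    (C D : Set ((Fin N → Bool) → Option Bool)) (hC : C.Nonempty)
    (ha : ∑ ρ : Fin N → Option Bool,
        restrictionWeight N p ρ * disagrClass N (restrictFn N f ρ) C ≤ ε)
    (hb : ∀ g ∈ C, ∑ σ : Fin N → Option Bool,
        restrictionWeight N q σ * disagrClass N (restrictFn N g σ) D ≤ δ) :
    ∑ ρ : Fin N → Option Bool, ∑ σ : Fin N → Option Bool,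
        restrictionWeight N p ρ * restrictionWeight N q σ *
          disagrClass N (restrictFn N f (restrictionComp N ρ σ)) D
      ≤ ε + δ :=
  calc ∑ ρ, ∑ σ, restrictionWeight N p ρ * restrictionWeight N q σ *
          disagrClass N (restrictFn N f (restrictionComp N ρ σ)) D
      = ∑ ρ, restrictionWeight N p ρ *
          ∑ σ, restrictionWeight N q σ * disagrClass N (restrictFn N (restrictFn N f ρ) σ) D := by
        simp only [restrictFn_restrictionComp, mul_sum, mul_assoc]
    _ ≤ ∑ ρ, restrictionWeight N p ρ * (disagrClass N (restrictFn N f ρ) C + δ) := by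
        refine sum_le_sum fun ρ _ => mul_le_mul_of_nonneg_left ?_ (restrictionWeight_nonneg hp0 hp1 ρ)
        obtain ⟨g, hgC, hg⟩ := exists_disagr_eq_disagrClass (restrictFn N f ρ) hC
        rw [← hg]
        exact (sum_restrictionWeight_mul_disagrClass_restrictFn_le hq0 hq1 _ g D).trans
          (add_le_add_right (hb g hgC) _)
    _ = ∑ ρ, restrictionWeight N p ρ * disagrClass N (restrictFn N f ρ) C + δ := by
        simp only [mul_add, sum_add_distrib, ← sum_mul, sum_restrictionWeight, one_mul]
    _ ≤ ε + δ := add_le_add_left ha δ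

/-- Disagreement accumulates additively under composed random restrictions:
if `E_ρ[disagr_{f_ρ}(C)] ≤ ε` and `E_σ[disagr_{g_σ}(D)] ≤ δ` for every `g ∈ C`,
then `E_{ρσ}[disagr_{f_{ρσ}}(D)] ≤ ε + δ`. -/
theorem disagr_composing_restrictions (N : ℕ) (p q ε δ : ℝ)
    (hp0 : 0 ≤ p) (hp1 : p ≤ 1) (hq0 : 0 ≤ q) (hq1 : q ≤ 1)
    (f : (Fin N → Bool) → Option Bool)
    (C D : Set ((Fin N → Bool) → Option Bool)) (hC : C.Nonempty) (hD : D.Nonempty)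
    (ha : ∑ ρ : Fin N → Option Bool,
        restrictionWeight N p ρ * disagrClass N (restrictFn N f ρ) C ≤ ε)
    (hb : ∀ g ∈ C, ∑ σ : Fin N → Option Bool,
        restrictionWeight N q σ * disagrClass N (restrictFn N g σ) D ≤ δ) :
    ∑ ρ : Fin N → Option Bool, ∑ σ : Fin N → Option Bool,
        restrictionWeight N p ρ * restrictionWeight N q σ *
          disagrClass N (restrictFn N f (restrictionComp N ρ σ)) D
      ≤ ε + δ :=
  disagr_composing_restrictions_general N p q ε δ hp0 hp1 hq0 hq1 f C D hC ha hb
end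

section
/- Let f : {0,1}^N → {0,1} be a Boolean function and B = {B_1,…,B_k} a collection of pairwise disjoint subsets of [N]. Define g : {0,1}^{N+k} → {0,1} by g(y, z) = f(y ⊕ z_1·B_1 ⊕ ⋯ ⊕ z_k·B_k), where z_i·B_i is the indicator string of B_i if z_i = 1 and the all-zeros string otherwise. Then for every x ∈ {0,1}^N and every (y,z) with x = y ⊕ z_1·B_1 ⊕ ⋯ ⊕ z_k·B_k, the B-block sensitivity satisfies bs_B^x(f) ≤ s^{(y,z)}(g). Consequently, for every t, Pr_{x∼{0,1}^N}[bs_B^x(f) ≥ t] ≤ Pr_{(y,z)∼{0,1}^{N+k}}[s^{(y,z)}(g) ≥ t]. -/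
open Finset

/-- Flip all bits of `x` indexed by the set `S`. -/
def flipSet (N : ℕ) (S : Finset (Fin N)) (x : Fin N → Bool) : Fin N → Bool :=
  fun j => xor (x j) (decide (j ∈ S))

/-- Block sensitivity of `f` at `x` with respect to the blocks `B : Fin k → Finset (Fin N)`:
the number of blocks whose flip changes the value of `f`. -/
def blockSens (N k : ℕ) (B : Fin k → Finset (Fin N)) (f : (Fin N → Bool) → Bool)
    (x : Fin N → Bool) : ℕ :=
  (Finset.univ.filter fun i : Fin k => f (flipSet N (B i) x) ≠ f x).card

/-- `combine B y z = y ⊕ z_1·B_1 ⊕ ⋯ ⊕ z_k·B_k`. -/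
def combineInput (N k : ℕ) (B : Fin k → Finset (Fin N)) (y : Fin N → Bool)
    (z : Fin k → Bool) : Fin N → Bool :=
  fun j => xor (y j) (decide (∃ i, z i = true ∧ j ∈ B i))

/-- `g(y,z) = f(y ⊕ z_1·B_1 ⊕ ⋯ ⊕ z_k·B_k)`. -/
def gFun (N k : ℕ) (B : Fin k → Finset (Fin N)) (f : (Fin N → Bool) → Bool)
    (y : Fin N → Bool) (z : Fin k → Bool) : Bool :=
  f (combineInput N k B y z)

/-- Sensitivity of `g` at the pair `(y,z)`: the number of single-bit flips (of `y` or
of `z`) that change the value of `g`. -/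
def sensPair (N k : ℕ) (g : (Fin N → Bool) → (Fin k → Bool) → Bool)
    (y : Fin N → Bool) (z : Fin k → Bool) : ℕ :=
  (Finset.univ.filter fun j : Fin N => g (Function.update y j (!y j)) z ≠ g y z).card +
  (Finset.univ.filter fun i : Fin k => g y (Function.update z i (!z i)) ≠ g y z).card

/-! Since the blocks are disjoint, flipping the selector bit `z i` flips exactly the block `B i`
of the combined input `x = y ⊕ ⊕ᵢ zᵢ·Bᵢ`, so every block on which `f` is sensitive at `x` gives a
sensitive `z`-coordinate of `g` at `(y, z)`. For the distributional statement, the map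
`(y, z) ↦ (y ⊕ ⊕ᵢ zᵢ·Bᵢ, z)` is an involution of `{0,1}^(N+k)`, so it embeds
`{x | t ≤ bs x} × {0,1}^k` into `{(y, z) | t ≤ s(y, z)}`. -/

section Blocks

variable {N k : ℕ} {B : Fin k → Finset (Fin N)}

theorem exists_block_iff_of_mem (hdisj : ∀ i j : Fin k, i ≠ j → Disjoint (B i) (B j))
    (z : Fin k → Bool) {i : Fin k} {j : Fin N} (hj : j ∈ B i) :
    (∃ i', z i' = true ∧ j ∈ B i') ↔ z i = true := by
  refine ⟨fun ⟨i', hz, hj'⟩ => ?_, fun hz => ⟨i, hz, hj⟩⟩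
  obtain rfl : i' = i := by_contra fun h => disjoint_left.1 (hdisj i' i h) hj' hj
  exact hz

theorem exists_block_update_iff_of_notMem (z : Fin k → Bool) (b : Bool) {i : Fin k} {j : Fin N}
    (hj : j ∉ B i) :
    (∃ i', Function.update z i b i' = true ∧ j ∈ B i') ↔ ∃ i', z i' = true ∧ j ∈ B i' :=
  exists_congr fun i' => and_congr_left fun hj' => by
    rw [Function.update_of_ne (by rintro rfl; exact hj hj')]

theorem combineInput_update_not (hdisj : ∀ i j : Fin k, i ≠ j → Disjoint (B i) (B j))
    (y : Fin N → Bool) (z : Fin k → Bool) (i : Fin k) :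
    combineInput N k B y (Function.update z i (!z i)) =
      flipSet N (B i) (combineInput N k B y z) := by
  funext j
  simp only [combineInput, flipSet]
  by_cases hj : j ∈ B i
  · simp only [exists_block_iff_of_mem hdisj _ hj, Function.update_self, hj]
    cases y j <;> cases z i <;> rfl
  · simp [exists_block_update_iff_of_notMem z _ hj, hj]

theorem combineInput_combineInput (y : Fin N → Bool) (z : Fin k → Bool) :
    combineInput N k B (combineInput N k B y z) z = y := by
  funext j
  simp [combineInput]

theorem combineInput_involutive :
    Function.Involutive fun p : (Fin N → Bool) × (Fin k → Bool) =>
      (combineInput N k B p.1 p.2, p.2) :=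
  fun p => by simp only [combineInput_combineInput]

theorem blockSens_combineInput_le_sensPair (hdisj : ∀ i j : Fin k, i ≠ j → Disjoint (B i) (B j))
    (f : (Fin N → Bool) → Bool) (y : Fin N → Bool) (z : Fin k → Bool) :
    blockSens N k B f (combineInput N k B y z) ≤ sensPair N k (gFun N k B f) y z := by
  unfold blockSens sensPair gFun
  simp only [combineInput_update_not hdisj]
  exact Nat.le_add_left _ _

theorem card_blockSens_ge_mul_le_card_sensPair_ge
    (hdisj : ∀ i j : Fin k, i ≠ j → Disjoint (B i) (B j)) (f : (Fin N → Bool) → Bool) (t : ℕ) :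
    #{x | t ≤ blockSens N k B f x} * 2 ^ k ≤
      #{p : (Fin N → Bool) × (Fin k → Bool) | t ≤ sensPair N k (gFun N k B f) p.1 p.2} := by
  calc #{x | t ≤ blockSens N k B f x} * 2 ^ k
      = #(({x | t ≤ blockSens N k B f x} : Finset _) ×ˢ (univ : Finset (Fin k → Bool))) := by
        simp
    _ ≤ _ := by
      refine card_le_card_of_injOn _ ?_ (combineInput_involutive (B := B)).injective.injOn
      rintro ⟨x, z⟩ hx
      simp only [coe_product, coe_filter, mem_univ, true_and, Set.mem_prod, Set.mem_ofPred_eq,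
        coe_univ, Set.mem_univ, and_true] at hx ⊢
      calc t ≤ blockSens N k B f x := hx
        _ = blockSens N k B f (combineInput N k B (combineInput N k B x z) z) := by
          rw [combineInput_combineInput]
        _ ≤ _ := blockSens_combineInput_le_sensPair hdisj f _ z

end Blocks

/-- Block sensitivity of `f` is dominated by the sensitivity of the auxiliary
function `g(y,z) = f(y ⊕ ⊕_i z_i·B_i)`, pointwise on fibres and hence in
distribution over uniform inputs. -/
theorem blockSens_le_sens_aux (N k : ℕ) (B : Fin k → Finset (Fin N))
    (hdisj : ∀ i j : Fin k, i ≠ j → Disjoint (B i) (B j))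
    (f : (Fin N → Bool) → Bool) :
    (∀ (x : Fin N → Bool) (y : Fin N → Bool) (z : Fin k → Bool),
        combineInput N k B y z = x →
        blockSens N k B f x ≤ sensPair N k (gFun N k B f) y z) ∧
    (∀ t : ℕ,
      ((Finset.univ.filter fun x : Fin N → Bool => t ≤ blockSens N k B f x).card : ℝ)
          / 2 ^ N
        ≤ ((Finset.univ.filter fun p : (Fin N → Bool) × (Fin k → Bool) =>
              t ≤ sensPair N k (gFun N k B f) p.1 p.2).card : ℝ) / 2 ^ (N + k)) := by
  refine ⟨fun x y z hx => hx ▸ blockSens_combineInput_le_sensPair hdisj f y z, fun t => ?_⟩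
  rw [pow_add, ← div_div, le_div_iff₀ (by positivity), div_mul_eq_mul_div,
    div_le_div_iff_of_pos_right (by positivity)]
  exact_mod_cast card_blockSens_ge_mul_le_card_sensPair_ge hdisj f t
end
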